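/- arXiv:2503.17294 — 10 statements merged into one kernel-verified Lean document; each statement's English description precedes it below -/
import Mathlib

section
/- Let k ≥ 1 and let a, b, c ∈ ℤ^k be integer vectors satisfying, for all i = 1, …, k, the inequalities a_1 + … + a_{i-1} + b_i + c_i ≥ 0 and b_1 + … + b_{i-1} + a_i + c_i < 0. Then b_i − a_i ≥ 2^{i−1} for all i = 1, …, k. -/
lemma geom2 (n : ℕ) : ∑ i ∈ Finset.range n, (2:ℤ)^i = 2^n - 1 := by
  induction n with
  | zero => simp
  | succ n ih => rw [Finset.sum_range_succ, ih]; ring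

theorem stmt0 (k : ℕ) (hk : 1 ≤ k) (a b c : ℕ → ℤ)
    (h1 : ∀ i, 1 ≤ i → i ≤ k → 0 ≤ (∑ j ∈ Finset.Ico 1 i, a j) + b i + c i)
    (h2 : ∀ i, 1 ≤ i → i ≤ k → (∑ j ∈ Finset.Ico 1 i, b j) + a i + c i < 0) :
    ∀ i, 1 ≤ i → i ≤ k → (2 : ℤ) ^ (i - 1) ≤ b i - a i := by
  intro i
  induction i using Nat.strong_induction_on with
  | _ i ih =>
    intro hi1 hik
    have key : 1 + (∑ j ∈ Finset.Ico 1 i, (b j - a j)) ≤ b i - a i := by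
      have e1 := h1 i hi1 hik
      have e2 := h2 i hi1 hik
      have := Finset.sum_sub_distrib (s := Finset.Ico 1 i) (f := b) (g := a)
      omega
    have hsum : ∑ j ∈ Finset.Ico 1 i, (2:ℤ)^(j-1) ≤ ∑ j ∈ Finset.Ico 1 i, (b j - a j) := by
      apply Finset.sum_le_sum
      intro j hj
      simp only [Finset.mem_Ico] at hj
      exact ih j hj.2 hj.1 (le_trans (Nat.le_of_lt hj.2) hik)
    have hgeom : ∑ j ∈ Finset.Ico 1 i, (2:ℤ)^(j-1) = 2^(i-1) - 1 := by
      rw [Finset.sum_Ico_eq_sum_range]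
      simp only [Nat.add_sub_cancel_left]
      exact geom2 (i-1)
    omega
end

section
/- Let k ≥ 1 and let a, b, c ∈ ℤ^k satisfy, for all i = 1, …, k, the inequalities a_1 + … + a_{i-1} + b_i + c_i ≥ 0 and b_1 + … + b_{i-1} + a_i + c_i < 0. Then max(|a_k|, |b_k|) ≥ 2^{k−2}, i.e., 2·max(|a_k|,|b_k|) ≥ 2^{k−1}. -/
theorem stmt1 (k : ℕ) (hk : 1 ≤ k) (a b c : ℕ → ℤ)
    (h1 : ∀ i, 1 ≤ i → i ≤ k → 0 ≤ (∑ j ∈ Finset.Ico 1 i, a j) + b i + c i)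
    (h2 : ∀ i, 1 ≤ i → i ≤ k → (∑ j ∈ Finset.Ico 1 i, b j) + a i + c i < 0) :
    (2 : ℤ) ^ (k - 1) ≤ 2 * max |a k| |b k| := by
  set S : ℕ → ℤ := fun i => ∑ j ∈ Finset.Ico 1 i, (b j - a j) with hS
  have key : ∀ i, 1 ≤ i → i ≤ k → S i + 1 ≤ b i - a i := by
    intro i hi1 hik
    have h1' := h1 i hi1 hik
    have h2' := h2 i hi1 hik
    have : S i = (∑ j ∈ Finset.Ico 1 i, b j) - (∑ j ∈ Finset.Ico 1 i, a j) := by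
      simp [hS, Finset.sum_sub_distrib]
    linarith
  have main : ∀ i, i ≤ k → (2 : ℤ) ^ i - 1 ≤ S (i + 1) := by
    intro i
    induction i with
    | zero => intro _; simp [hS]
    | succ n ih =>
      intro hn
      have h1 : S (n + 2) = S (n + 1) + (b (n+1) - a (n+1)) := by
        simp only [hS]
        exact Finset.sum_Ico_succ_top (by omega) _
      have h2 := key (n + 1) (by omega) hn
      have h3 := ih (by omega)
      rw [h1]
      have : (2:ℤ)^(n+1) = 2 * 2^n := by ring
      linarith
  have hk' : k - 1 + 1 = k := by omega
  have h4 := main (k - 1) (by omega)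
  rw [hk'] at h4
  have h5 := key k hk le_rfl
  have h6 : (2:ℤ)^(k-1) ≤ b k - a k := by linarith
  have ha : -|a k| ≤ a k := neg_abs_le _
  have hb : b k ≤ |b k| := le_abs_self _
  have h7 : |a k| ≤ max |a k| |b k| := le_max_left _ _
  have h8 : |b k| ≤ max |a k| |b k| := le_max_right _ _
  linarith
end

section
/- For every k ≥ 2, the integer vectors defined by a_i = ⌊−2^{i−2}⌋, b_i = ⌊2^{i−2}⌋, and c_i = 0 satisfy, for all i = 1, …, k, the inequalities a_1 + … + a_{i-1} + b_i + c_i ≥ 0 and b_1 + … + b_{i-1} + a_i + c_i < 0. Hence the lower bound b_i − a_i ≥ 2^{i−1} in the previous lemma is attained up to a constant. -/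
theorem stmt2 (k : ℕ) (hk : 2 ≤ k) (a b c : ℕ → ℤ)
    (ha : ∀ i, a i = if i = 1 then -1 else -(2 : ℤ) ^ (i - 2))
    (hb : ∀ i, b i = if i = 1 then 0 else (2 : ℤ) ^ (i - 2))
    (hc : ∀ i, c i = 0) :
    ∀ i, 1 ≤ i → i ≤ k →
      0 ≤ (∑ j ∈ Finset.Ico 1 i, a j) + b i + c i ∧
      (∑ j ∈ Finset.Ico 1 i, b j) + a i + c i < 0 := by
  have sumA : ∀ i, 1 ≤ i →
      (∑ j ∈ Finset.Ico 1 i, a j) = if i = 1 then 0 else -(2 : ℤ) ^ (i - 2) := by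
    intro i hi
    induction i with
    | zero => omega
    | succ n ih =>
      rcases Nat.eq_or_lt_of_le hi with h | h
      · simp [← h]
      · have hn : 1 ≤ n := by omega
        rw [Finset.sum_Ico_succ_top hn, ih hn, ha n]
        rcases Nat.eq_or_lt_of_le hn with h1 | h1
        · simp [← h1]
        · have hn2 : 2 ≤ n := h1
          have : n - 1 = (n - 2) + 1 := by omega
          simp only [if_neg (by omega : ¬ n = 1), if_neg (by omega : ¬ n + 1 = 1)]
          have : n + 1 - 2 = (n - 2) + 1 := by omega
          rw [this]
          ring
  have sumB : ∀ i, 1 ≤ i →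
      (∑ j ∈ Finset.Ico 1 i, b j) = if i = 1 then 0 else (2 : ℤ) ^ (i - 2) - 1 := by
    intro i hi
    induction i with
    | zero => omega
    | succ n ih =>
      rcases Nat.eq_or_lt_of_le hi with h | h
      · simp [← h]
      · have hn : 1 ≤ n := by omega
        rw [Finset.sum_Ico_succ_top hn, ih hn, hb n]
        rcases Nat.eq_or_lt_of_le hn with h1 | h1
        · simp [← h1]
        · have hn2 : 2 ≤ n := h1
          simp only [if_neg (by omega : ¬ n = 1), if_neg (by omega : ¬ n + 1 = 1)]
          have : n + 1 - 2 = (n - 2) + 1 := by omega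
          rw [this]
          ring
  intro i hi _
  rw [sumA i hi, sumB i hi, ha i, hb i, hc i]
  rcases Nat.eq_or_lt_of_le hi with h | h
  · simp [← h]
  · simp only [if_neg (by omega : ¬ i = 1)]
    constructor
    · ring_nf; positivity
    · have : (0:ℤ) < 2 ^ (i - 2) := by positivity
      linarith
end

section
/- Let G be a directed graph with set of directed simple cycles 𝒞, let ψ : 𝒞 → {−, 0, +} be a cycle pattern, and let w ∈ ℝ^E be a realization of ψ (meaning sign(Σ_{e∈C} w(e)) corresponds to ψ(C) for every cycle C). Then there is no opposing pair, i.e., there are no nonempty finite sequences of cycles C_1, …, C_p and D_1, …, D_q with ψ(C_i) ∈ {0, +} for all i, ψ(D_j) ∈ {0, −} for all j, at least one C_i with ψ(C_i) = + or one D_j with ψ(D_j) = −, and Σ_{i=1}^p χ(C_i) = Σ_{j=1}^q χ(D_j) as vectors in ℝ^E. -/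
def IsCycle {V E : Type*} (src tgt : E → V) (es : List E) : Prop :=
  es ≠ [] ∧ es.Chain' (fun e f => tgt e = src f) ∧
    (∀ h : es ≠ [], tgt (es.getLast h) = src (es.head h)) ∧
    (es.map src).Nodup

section aux
variable {E : Type*} [DecidableEq E] (w : E → ℝ)

lemma count_M (L : List (List E)) (e : E) :
    Multiset.count e ((L.map (fun C => Multiset.ofList C)).sum) =
      (L.map (fun C => C.count e)).sum := by
  induction L with
  | nil => simp
  | cons C L ih =>
      simp only [List.map_cons, List.sum_cons, Multiset.count_add, ih, Multiset.coe_count]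

lemma sum_M (L : List (List E)) :
    ((((L.map (fun C => Multiset.ofList C)).sum).map w).sum) =
      (L.map (fun C => (C.map w).sum)).sum := by
  induction L with
  | nil => simp
  | cons C L ih =>
      simp only [List.map_cons, List.sum_cons, Multiset.map_add, Multiset.sum_add, ih,
        Multiset.map_coe, Multiset.sum_coe]

lemma neg_sum_M (L : List (List E)) :
    (L.map (fun D => -(D.map w).sum)).sum = -(L.map (fun D => (D.map w).sum)).sum := by
  induction L with
  | nil => simp
  | cons D L ih => simp only [List.map_cons, List.sum_cons, ih]; ring

end aux

theorem stmt5 {V E : Type*} [DecidableEq E] (src tgt : E → V)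
    (ψ : List E → SignType) (w : E → ℝ)
    (hreal : ∀ es, IsCycle src tgt es → SignType.sign ((es.map w).sum) = ψ es) :
    ¬ ∃ (Cs Ds : List (List E)), Cs ≠ [] ∧ Ds ≠ [] ∧
        (∀ C ∈ Cs, IsCycle src tgt C) ∧ (∀ D ∈ Ds, IsCycle src tgt D) ∧
        (∀ C ∈ Cs, ψ C = 0 ∨ ψ C = 1) ∧ (∀ D ∈ Ds, ψ D = 0 ∨ ψ D = -1) ∧
        ((∃ C ∈ Cs, ψ C = 1) ∨ (∃ D ∈ Ds, ψ D = -1)) ∧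
        (∀ e : E, (Cs.map (fun C => C.count e)).sum = (Ds.map (fun D => D.count e)).sum) := by
  rintro ⟨Cs, Ds, hCne, hDne, hCcyc, hDcyc, hCψ, hDψ, hstrict, hcount⟩
  have hM : (Cs.map (fun C => Multiset.ofList C)).sum = (Ds.map (fun C => Multiset.ofList C)).sum := by
    ext e
    rw [count_M, count_M]
    exact hcount e
  have hsum : (Cs.map (fun C => (C.map w).sum)).sum = (Ds.map (fun D => (D.map w).sum)).sum := by
    rw [← sum_M, ← sum_M, hM]
  have hCnn : ∀ C ∈ Cs, (0:ℝ) ≤ (C.map w).sum := by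
    intro C hC
    have := hreal C (hCcyc C hC)
    rcases hCψ C hC with h | h <;> rw [h] at this
    · exact le_of_eq (sign_eq_zero_iff.mp this).symm
    · exact le_of_lt (sign_eq_one_iff.mp this)
  have hDnp : ∀ D ∈ Ds, (D.map w).sum ≤ 0 := by
    intro D hD
    have := hreal D (hDcyc D hD)
    rcases hDψ D hD with h | h <;> rw [h] at this
    · exact le_of_eq (sign_eq_zero_iff.mp this)
    · exact le_of_lt (sign_eq_neg_one_iff.mp this)
  have hCge : (0:ℝ) ≤ (Cs.map (fun C => (C.map w).sum)).sum := by
    apply List.sum_nonneg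
    intro x hx
    obtain ⟨C, hC, rfl⟩ := List.mem_map.mp hx
    exact hCnn C hC
  have hDle : (Ds.map (fun D => (D.map w).sum)).sum ≤ 0 := by
    have h1 : (0:ℝ) ≤ (Ds.map (fun D => -(D.map w).sum)).sum := by
      apply List.sum_nonneg
      intro x hx
      obtain ⟨D, hD, rfl⟩ := List.mem_map.mp hx
      simpa using hDnp D hD
    rw [neg_sum_M] at h1
    linarith
  rcases hstrict with ⟨C, hC, hψ⟩ | ⟨D, hD, hψ⟩
  · have hpos : (0:ℝ) < (C.map w).sum := by
      have := hreal C (hCcyc C hC)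
      rw [hψ] at this
      exact sign_eq_one_iff.mp this
    have hle : (C.map w).sum ≤ (Cs.map (fun C => (C.map w).sum)).sum := by
      apply List.single_le_sum
      · intro x hx
        obtain ⟨C', hC', rfl⟩ := List.mem_map.mp hx
        exact hCnn C' hC'
      · exact List.mem_map.mpr ⟨C, hC, rfl⟩
    linarith
  · have hneg : (D.map w).sum < 0 := by
      have := hreal D (hDcyc D hD)
      rw [hψ] at this
      exact sign_eq_neg_one_iff.mp this
    have hle : -(D.map w).sum ≤ (Ds.map (fun D => -(D.map w).sum)).sum := by
      apply List.single_le_sum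
      · intro x hx
        obtain ⟨D', hD', rfl⟩ := List.mem_map.mp hx
        simpa using hDnp D' hD'
      · exact List.mem_map.mpr ⟨D, hD, rfl⟩
    rw [neg_sum_M] at hle
    linarith
end

section
/- Let G be a directed graph and ψ a cycle pattern parity-induced by a priority function w : E → ℤ (ψ(C) = + if the largest priority on C is even, ψ(C) = − if it is odd). Then for every nonempty subset S ⊆ E of edges, there exists an edge e ∈ S such that all directed simple cycles C with e ∈ C and C ⊆ S receive the same sign under ψ. -/
theorem List.maximum_map_eq_of_mem_of_forall_le {α β : Type*} [LinearOrder β] {f : α → β}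
    {l : List α} {a : α} (ha : a ∈ l) (hle : ∀ b ∈ l, f b ≤ f a) :
    (l.map f).maximum = (f a : WithBot β) := by
  rw [List.maximum_eq_coe_iff]
  refine ⟨List.mem_map_of_mem ha, ?_⟩
  rintro _ hfb
  obtain ⟨b, hb, rfl⟩ := List.mem_map.mp hfb
  exact hle b hb

theorem stmt6_general {V E : Type*} (src tgt : E → V) (w : E → ℤ)
    (ψ : List E → SignType)
    (hψ : ∀ es (m : ℤ), IsCycle src tgt es → (es.map w).maximum = (m : WithBot ℤ) →
      ψ es = if Even m then 1 else -1) :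
    ∀ S : Finset E, S.Nonempty → ∃ e ∈ S,
      ∀ C₁ C₂, IsCycle src tgt C₁ → IsCycle src tgt C₂ → e ∈ C₁ → e ∈ C₂ →
        (∀ f ∈ C₁, f ∈ S) → (∀ f ∈ C₂, f ∈ S) → ψ C₁ = ψ C₂ := by
  intro S hS
  obtain ⟨e, heS, hmax⟩ := S.exists_max_image w hS
  have sign_eq : ∀ C, IsCycle src tgt C → e ∈ C → (∀ f ∈ C, f ∈ S) →
      ψ C = if Even (w e) then 1 else -1 := fun C hC heC hCS =>
    hψ C (w e) hC <| List.maximum_map_eq_of_mem_of_forall_le heC fun f hf => hmax f (hCS f hf)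
  refine ⟨e, heS, fun C₁ C₂ h₁ h₂ he₁ he₂ hC₁S hC₂S => ?_⟩
  rw [sign_eq C₁ h₁ he₁ hC₁S, sign_eq C₂ h₂ he₂ hC₂S]

theorem stmt6 {V E : Type*} [Fintype E] (src tgt : E → V) (w : E → ℤ)
    (ψ : List E → SignType)
    (hψ : ∀ es (m : ℤ), IsCycle src tgt es → (es.map w).maximum = (m : WithBot ℤ) →
      ψ es = if Even m then 1 else -1) :
    ∀ S : Finset E, S.Nonempty → ∃ e ∈ S,
      ∀ C₁ C₂, IsCycle src tgt C₁ → IsCycle src tgt C₂ → e ∈ C₁ → e ∈ C₂ →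
        (∀ f ∈ C₁, f ∈ S) → (∀ f ∈ C₂, f ∈ S) → ψ C₁ = ψ C₂ :=
  stmt6_general src tgt w ψ hψ
end

section
/- Let G be a finite directed graph and ψ a cycle pattern on G with no 0-cycles (ψ(C) ∈ {+, −} for all cycles C). Suppose that for every nonempty subset S ⊆ E there exists an edge e ∈ S such that all cycles C with e ∈ C and C ⊆ S have the same sign under ψ. Then ψ is parity-realizable: there exists a priority function w : E → ℤ such that for every cycle C, ψ(C) = + if and only if the maximum priority max_{e∈C} w(e) is even. -/
theorem stmt7 {V E : Type*} [Fintype E] (src tgt : E → V)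
    (ψ : List E → SignType)
    (hno0 : ∀ es, IsCycle src tgt es → ψ es = 1 ∨ ψ es = -1)
    (hcond : ∀ S : Finset E, S.Nonempty → ∃ e ∈ S,
      ∀ C₁ C₂, IsCycle src tgt C₁ → IsCycle src tgt C₂ → e ∈ C₁ → e ∈ C₂ →
        (∀ f ∈ C₁, f ∈ S) → (∀ f ∈ C₂, f ∈ S) → ψ C₁ = ψ C₂) :
    ∃ w : E → ℤ, ∀ es (m : ℤ), IsCycle src tgt es → (es.map w).maximum = (m : WithBot ℤ) →
      (ψ es = 1 ↔ Even m) := by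
  classical
  suffices h : ∀ S : Finset E, ∃ w : E → ℤ, ∀ es, IsCycle src tgt es →
      (∀ f ∈ es, f ∈ S) → ∀ m : ℤ, (es.map w).maximum = (m : WithBot ℤ) →
      (ψ es = 1 ↔ Even m) by
    obtain ⟨w, hw⟩ := h Finset.univ
    exact ⟨w, fun es m hc hm => hw es hc (fun f _ => Finset.mem_univ f) m hm⟩
  intro S
  induction S using Finset.strongInduction with
  | _ S IH =>
    rcases S.eq_empty_or_nonempty with rfl | hS
    · refine ⟨0, fun es hc hsub m hm => ?_⟩
      exact absurd (hsub (es.head hc.1) (List.head_mem hc.1)) (by simp)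
    obtain ⟨e, heS, he⟩ := hcond S hS
    obtain ⟨w', hw'⟩ := IH (S.erase e) (Finset.erase_ssubset heS)
    set M : ℤ := ∑ f : E, |w' f| with hM
    have hMnn : 0 ≤ M := Finset.sum_nonneg fun f _ => abs_nonneg _
    have hwM : ∀ f, w' f ≤ M := fun f =>
      (le_abs_self _).trans (Finset.single_le_sum (fun g _ => abs_nonneg (w' g))
        (Finset.mem_univ f))
    set σ : Prop := ∃ C, IsCycle src tgt C ∧ e ∈ C ∧ (∀ f ∈ C, f ∈ S) ∧ ψ C = 1 with hσdef
    set N : ℤ := if σ then 2*M + 2 else 2*M + 3 with hN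
    have hNM : ∀ f, w' f < N := by
      intro f
      have := hwM f
      rw [hN]; split <;> omega
    refine ⟨Function.update w' e N, fun es hc hsub m hm => ?_⟩
    by_cases hes : e ∈ es
    · have hNle : N ≤ m := List.le_maximum_of_mem
        (List.mem_map.2 ⟨e, hes, Function.update_self _ _ _⟩) hm
      obtain ⟨f, hf, hfm⟩ := List.mem_map.1 (List.maximum_mem hm)
      have hmN : m = N := by
        by_cases hfe : f = e
        · subst hfe; rw [Function.update_self] at hfm; omega
        · rw [Function.update_of_ne hfe] at hfm
          have := hNM f; omega
      rw [hmN]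
      constructor
      · intro hψ
        have hσ : σ := ⟨es, hc, hes, hsub, hψ⟩
        rw [hN, if_pos hσ]
        exact ⟨M + 1, by ring⟩
      · intro hEv
        by_contra hψ
        have hψ' : ψ es = -1 := (hno0 es hc).resolve_left hψ
        have hσ : ¬ σ := by
          rintro ⟨C, hC, heC, hCsub, hC1⟩
          have := he C es hC hc heC hes hCsub hsub
          rw [hC1, hψ'] at this
          exact absurd this (by decide)
        rw [hN, if_neg hσ] at hEv
        obtain ⟨k, hk⟩ := hEv
        omega
    · have hmapeq : es.map (Function.update w' e N) = es.map w' :=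
        List.map_congr_left fun f hf => Function.update_of_ne (fun h : f = e => hes (h ▸ hf)) _ _
      exact hw' es hc (fun f hf => Finset.mem_erase.2 ⟨fun h => hes (h ▸ hf), hsub f hf⟩) m
        (hmapeq ▸ hm)
end

section
/- If G is a directed graph with a weight function w : E → ℝ such that every edge of G lies both in a directed simple cycle of strictly positive total weight and in a directed simple cycle of strictly negative total weight, then the induced cycle pattern ψ_w is not parity-realizable: there is no priority function p : E → ℤ such that for every cycle C, w(C) > 0 iff max_{e∈C} p(e) is even and w(C) < 0 iff max_{e∈C} p(e) is odd. -/
theorem List.maximum_map_eq_of_forall_le {α β : Type*} [LinearOrder β] (f : α → β) {a : α}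
    (ha : ∀ b, f b ≤ f a) {l : List α} (hl : a ∈ l) : (l.map f).maximum = (f a : WithBot β) :=
  List.maximum_eq_coe_iff.mpr ⟨List.mem_map_of_mem hl, by
    simpa only [List.mem_map, forall_exists_index, and_imp, forall_apply_eq_imp_iff₂] using
      fun b _ => ha b⟩

theorem stmt9 {V E : Type*} [Fintype E] [Nonempty E] (src tgt : E → V) (w : E → ℝ)
    (hpos : ∀ e : E, ∃ C, IsCycle src tgt C ∧ e ∈ C ∧ 0 < (C.map w).sum)
    (hneg : ∀ e : E, ∃ C, IsCycle src tgt C ∧ e ∈ C ∧ (C.map w).sum < 0) :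
    ¬ ∃ p : E → ℤ, ∀ es (m : ℤ), IsCycle src tgt es → (es.map p).maximum = (m : WithBot ℤ) →
        ((0 < (es.map w).sum ↔ Even m) ∧ ((es.map w).sum < 0 ↔ Odd m)) := by
  rintro ⟨p, hp⟩
  obtain ⟨e, he⟩ := Finite.exists_max p
  obtain ⟨C₁, hC₁, he₁, hw₁⟩ := hpos e
  obtain ⟨C₂, hC₂, he₂, hw₂⟩ := hneg e
  have heven : Even (p e) :=
    (hp C₁ (p e) hC₁ (List.maximum_map_eq_of_forall_le p he he₁)).1.mp hw₁
  have hodd : Odd (p e) :=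
    (hp C₂ (p e) hC₂ (List.maximum_map_eq_of_forall_le p he he₂)).2.mp hw₂
  exact Int.not_even_iff_odd.mpr hodd heven
end

section
/- Let w : E → ℤ be a priority function on a directed graph G and define w' : E → ℝ by w'(e) = (−n)^{w(e)} where n = |V| ≥ 2 and all priorities are nonnegative. Then for every directed simple cycle C, the sign of Σ_{e∈C} w'(e) is + if the largest priority max_{e∈C} w(e) is even and − if it is odd. In other words, the cycle pattern parity-induced by w equals the cycle pattern induced by w', so every parity-realizable cycle pattern is realizable. -/
lemma key_aux (n m : ℕ) (hn : 2 ≤ n) (L : List ℕ) (hL : L ≠ [])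
    (hmem : m ∈ L) (hle : ∀ j ∈ L, j ≤ m) (hlen : L.length ≤ n) :
    0 < (-1 : ℝ) ^ m * (L.map (fun k => (-(n : ℝ)) ^ k)).sum := by
  have hn1 : (1 : ℝ) ≤ (n : ℝ) := by exact_mod_cast Nat.one_le_of_lt hn
  cases m with
  | zero =>
    have : L.map (fun k => (-(n : ℝ)) ^ k) = L.map (fun _ => (1 : ℝ)) := by
      apply List.map_congr_left
      intro j hj
      have : j = 0 := Nat.le_zero.mp (hle j hj)
      simp [this]
    rw [this]
    have hlen0 : 0 < L.length := List.length_pos_iff.mpr hL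
    simp only [pow_zero, one_mul, List.map_const', List.sum_replicate, nsmul_eq_mul, mul_one]
    exact_mod_cast hlen0
  | succ m =>
    set M := m + 1
    set g : ℕ → ℝ := fun k => (-1 : ℝ) ^ M * (-(n : ℝ)) ^ k with hg
    rw [← List.sum_map_mul_left]
    have hperm : L.Perm (M :: L.erase M) := List.perm_cons_erase hmem
    have hsum : (L.map g).sum = g M + ((L.erase M).map g).sum := by
      rw [(hperm.map g).sum_eq]
      simp
    have hgM : g M = (n : ℝ) ^ M := by
      rw [hg]; simp [← mul_pow]
    have hbound : ∀ x ∈ (L.erase M).map g, -((n : ℝ) ^ m) ≤ x := by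
      intro x hx
      obtain ⟨j, hj, rfl⟩ := List.mem_map.mp hx
      have hjL : j ∈ L := List.mem_of_mem_erase hj
      have hjM : j ≤ M := hle j hjL
      rcases eq_or_lt_of_le hjM with h | h
      · rw [h, hgM]
        have : (0:ℝ) < (n:ℝ)^m := pow_pos (by linarith) m
        have : (0:ℝ) < (n:ℝ)^M := pow_pos (by linarith) M
        nlinarith [pow_pos (show (0:ℝ) < (n:ℝ) by linarith) m]
      · have hjm : j ≤ m := Nat.lt_succ_iff.mp h
        have h1 : |g j| = (n : ℝ) ^ j := by
          rw [hg]; simp [abs_mul, abs_pow, abs_neg]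
        have h2 : (n : ℝ) ^ j ≤ (n : ℝ) ^ m := pow_le_pow_right₀ hn1 hjm
        have := neg_abs_le (g j)
        linarith
    have hrest : ((L.erase M).length : ℝ) • (-((n : ℝ) ^ m)) ≤ ((L.erase M).map g).sum := by
      have := List.card_nsmul_le_sum ((L.erase M).map g) (-((n : ℝ) ^ m)) hbound
      simpa using this
    have hlenerase : (L.erase M).length = L.length - 1 := List.length_erase_of_mem hmem
    have hlen1 : 1 ≤ L.length := List.length_pos_iff.mpr hL
    have hlr : ((L.erase M).length : ℝ) ≤ (n : ℝ) - 1 := by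
      rw [hlenerase]
      rw [Nat.cast_sub hlen1]
      have h2 : (L.length : ℝ) ≤ (n : ℝ) := by exact_mod_cast hlen
      simp only [Nat.cast_one]
      linarith
    have hnm : (0 : ℝ) < (n : ℝ) ^ m := pow_pos (by linarith) m
    have hM : (n : ℝ) ^ M = (n : ℝ) * (n : ℝ) ^ m := by rw [pow_succ]; ring
    rw [hsum, hgM]
    simp only [smul_eq_mul, nsmul_eq_mul] at hrest
    nlinarith [hrest, hlr, hnm]

theorem stmt10 {V E : Type*} [Fintype V] (src tgt : E → V) (w : E → ℕ)
    (hn : 2 ≤ Fintype.card V) :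
    ∀ es (m : ℕ), IsCycle src tgt es → (es.map w).maximum = (m : WithBot ℕ) →
      ((Even m → 0 < (es.map (fun e => (-(Fintype.card V : ℝ)) ^ (w e))).sum) ∧
       (Odd m → (es.map (fun e => (-(Fintype.card V : ℝ)) ^ (w e))).sum < 0)) := by
  intro es m hcyc hmax
  obtain ⟨hne, _, _, hnodup⟩ := hcyc
  set n := Fintype.card V
  set L := es.map w with hLdef
  have hLne : L ≠ [] := by simp [hLdef, hne]
  have hmem : m ∈ L := List.maximum_mem hmax
  have hle : ∀ j ∈ L, j ≤ m := fun j hj => List.le_maximum_of_mem hj hmax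
  have hlen : L.length ≤ n := by
    have := hnodup.length_le_card
    simpa [hLdef] using this
  have hkey := key_aux n m hn L hLne hmem hle hlen
  have hrw : es.map (fun e => (-(n : ℝ)) ^ (w e)) = L.map (fun k => (-(n : ℝ)) ^ k) := by
    simp [hLdef, List.map_map, Function.comp]
  constructor
  · intro hm
    rw [hm.neg_one_pow, one_mul] at hkey
    rw [hrw]; exact hkey
  · intro hm
    rw [hm.neg_one_pow, neg_one_mul, neg_pos] at hkey
    rw [hrw]; exact hkey
end

section
/- Let G be a directed graph with integer weights w : E → ℤ, n = |V|, and fix an edge d ∈ E. Define w₁(e) = (n+1)·w(e) + 1 for all e, and w₂(e) = (n+1)·w(e) + 1 for e ≠ d, w₂(d) = (n+1)·(w(d) − 1) + 1. Then there exists a directed simple cycle C with sign(Σ_{e∈C} w₁(e)) ≠ sign(Σ_{e∈C} w₂(e)) if and only if there exists a directed simple cycle C with d ∈ C and Σ_{e∈C} w(e) = 0. -/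
private lemma sum1_eq {E : Type*} (n : ℤ) (w : E → ℤ) (C : List E) :
    (C.map (fun e => n * w e + 1)).sum = n * (C.map w).sum + C.length := by
  induction C with
  | nil => simp
  | cons a t ih => simp [ih]; ring

private lemma sum2_eq {E : Type*} [DecidableEq E] (n : ℤ) (w : E → ℤ) (d : E) (C : List E) :
    (C.map (fun e => if e = d then n * (w e - 1) + 1 else n * w e + 1)).sum
      = (C.map (fun e => n * w e + 1)).sum - n * (C.count d) := by
  induction C with
  | nil => simp
  | cons a t ih =>
    by_cases h : a = d <;> simp [List.count_cons, h, ih] <;> ring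

private lemma sign_pos_of (n S L : ℤ) (h1 : 1 ≤ L) (hS : 0 ≤ S) (hn : 0 ≤ n) :
    SignType.sign ((n + 1) * S + L) = 1 := by
  apply sign_pos; nlinarith

private lemma sign_neg_of (n S L : ℤ) (h1 : 1 ≤ L) (h2 : L ≤ n) (hS : S ≤ -1) :
    SignType.sign ((n + 1) * S + L) = -1 := by
  apply sign_neg; nlinarith

private lemma core (n S L : ℤ) (hL1 : 1 ≤ L) (hLn : L ≤ n) :
    (SignType.sign ((n + 1) * S + L) ≠
      SignType.sign ((n + 1) * S + L - (n + 1) * 1)) ↔ S = 0 := by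
  have hn0 : 0 ≤ n := by omega
  rw [show (n + 1) * S + L - (n + 1) * 1 = (n + 1) * (S - 1) + L by ring]
  constructor
  · intro h
    by_contra hS0
    rcases lt_or_gt_of_ne hS0 with hlt | hgt
    · rw [sign_neg_of n S L hL1 hLn (by omega),
        sign_neg_of n (S - 1) L hL1 hLn (by omega)] at h
      exact h rfl
    · rw [sign_pos_of n S L hL1 (by omega) hn0,
        sign_pos_of n (S - 1) L hL1 (by omega) hn0] at h
      exact h rfl
  · intro h
    subst h
    rw [sign_pos_of n 0 L hL1 le_rfl hn0,
      sign_neg_of n (0 - 1) L hL1 hLn (by omega)]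
    decide

theorem stmt15 {V E : Type*} [Fintype V] [DecidableEq E] (src tgt : E → V)
    (w : E → ℤ) (d : E) :
    ((∃ C, IsCycle src tgt C ∧
        SignType.sign ((C.map (fun e => ((Fintype.card V : ℤ) + 1) * w e + 1)).sum) ≠
        SignType.sign ((C.map (fun e => if e = d then ((Fintype.card V : ℤ) + 1) * (w e - 1) + 1
            else ((Fintype.card V : ℤ) + 1) * w e + 1)).sum)) ↔
     (∃ C, IsCycle src tgt C ∧ d ∈ C ∧ (C.map w).sum = 0)) := by
  have key : ∀ C : List E, IsCycle src tgt C →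
      ((SignType.sign ((C.map (fun e => ((Fintype.card V : ℤ) + 1) * w e + 1)).sum) ≠
        SignType.sign ((C.map (fun e => if e = d then ((Fintype.card V : ℤ) + 1) * (w e - 1) + 1
            else ((Fintype.card V : ℤ) + 1) * w e + 1)).sum)) ↔
        (d ∈ C ∧ (C.map w).sum = 0)) := by
    intro C hC
    obtain ⟨hne, -, -, hnd⟩ := hC
    have hL1 : (1 : ℤ) ≤ C.length := by
      exact_mod_cast List.length_pos_iff.mpr hne
    have hLn : (C.length : ℤ) ≤ (Fintype.card V : ℤ) := by
      have h1 : (C.map src).length ≤ Fintype.card V := hnd.length_le_card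
      rw [List.length_map] at h1
      exact_mod_cast h1
    have hCnd : C.Nodup := hnd.of_map
    rw [sum2_eq, sum1_eq]
    by_cases hd : d ∈ C
    · rw [List.count_eq_one_of_mem hCnd hd, Nat.cast_one,
        core _ _ _ hL1 hLn]
      exact ⟨fun h => ⟨hd, h⟩, fun h => h.2⟩
    · rw [List.count_eq_zero_of_not_mem hd]
      simp [hd]
  constructor
  · rintro ⟨C, hC, hsign⟩
    exact ⟨C, hC, (key C hC).mp hsign⟩
  · rintro ⟨C, hC, hd, hS0⟩
    exact ⟨C, hC, (key C hC).mpr ⟨hd, hS0⟩⟩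
end

section
/- Consequently, if U is an undirected graph on more than 2 vertices with a Hamiltonian cycle, and G is its bidirected version, then the cycle pattern ψ on G defined by ψ(C) = + if C is a Hamiltonian directed cycle and ψ(C) = − otherwise is not realizable: there is no weight function w : E(G) → ℝ with sign(Σ_{e∈C} w(e)) = ψ(C) for all directed simple cycles C. -/
theorem map_src_reverse_map {V E : Type*} {src tgt : E → V} (rev : E → E)
    (hs : ∀ e, src (rev e) = tgt e) (es : List E) :
    (es.reverse.map rev).map src = (es.map tgt).reverse := by
  simp [List.map_reverse, Function.comp_def, hs]

namespace IsCycle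

variable {V E : Type*} {src tgt : E → V} {es : List E}

theorem tgt_getElem (hc : IsCycle src tgt es) (i : ℕ) (hi : i < es.length) :
    tgt es[i] = src (es[(i + 1) % es.length]'(Nat.mod_lt _ (by omega))) := by
  obtain ⟨hne, hch, hlast, -⟩ := hc
  rcases Nat.lt_or_ge (i + 1) es.length with hi' | hi'
  · simpa only [Nat.mod_eq_of_lt hi'] using List.isChain_iff_getElem.mp hch i hi'
  · have hi' : i + 1 = es.length := by omega
    simpa [hi', List.getLast_eq_getElem, List.head_eq_getElem, show es.length - 1 = i by omega]
      using hlast hne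

theorem map_tgt_eq_rotate (hc : IsCycle src tgt es) : es.map tgt = (es.map src).rotate 1 :=
  List.ext_getElem (by simp) fun i hi _ => by
    simpa using hc.tgt_getElem i (by simpa using hi)

theorem map_tgt_perm (hc : IsCycle src tgt es) : (es.map tgt).Perm (es.map src) :=
  hc.map_tgt_eq_rotate ▸ List.rotate_perm _ _

theorem src_ne_tgt (hc : IsCycle src tgt es) (hlen : 2 ≤ es.length) {e : E} (he : e ∈ es) :
    src e ≠ tgt e := by
  obtain ⟨i, hi, rfl⟩ := List.getElem_of_mem he
  rw [hc.tgt_getElem i hi]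
  intro h
  have hidx : i = (i + 1) % es.length :=
    (hc.2.2.2.getElem_inj_iff (hi := by simpa) (hj := by simpa using Nat.mod_lt _ (by omega))).mp
      (by simpa using h)
  rcases Nat.lt_or_ge (i + 1) es.length with hi' | hi'
  · rw [Nat.mod_eq_of_lt hi'] at hidx; omega
  · rw [show i + 1 = es.length by omega, Nat.mod_self] at hidx; omega

theorem reverse_map (rev : E → E) (hs : ∀ e, src (rev e) = tgt e)
    (ht : ∀ e, tgt (rev e) = src e) (hc : IsCycle src tgt es) :
    IsCycle src tgt (es.reverse.map rev) := by
  refine ⟨by simpa using hc.1, ?_, fun _ => ?_, ?_⟩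
  · refine (List.isChain_map _).mpr (List.isChain_reverse.mpr ?_)
    exact hc.2.1.imp fun a b hab => by simp [hs, ht, hab]
  · rw [List.getLast_map, List.head_map, List.getLast_reverse, List.head_reverse, ht, hs]
    exact (hc.2.2.1 hc.1).symm
  · rw [map_src_reverse_map rev hs, List.nodup_reverse]
    exact hc.map_tgt_perm.nodup_iff.mpr hc.2.2.2

theorem toFinset_map_src_reverse_map [DecidableEq V] (rev : E → E)
    (hs : ∀ e, src (rev e) = tgt e) (hc : IsCycle src tgt es) :
    ((es.reverse.map rev).map src).toFinset = (es.map src).toFinset := by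
  rw [map_src_reverse_map rev hs, List.toFinset_reverse,
    List.toFinset_eq_of_perm _ _ hc.map_tgt_perm]

end IsCycle

theorem isCycle_pair {V E : Type*} {src tgt : E → V} {e f : E} (hs : src f = tgt e)
    (ht : tgt f = src e) (hloop : src e ≠ tgt e) : IsCycle src tgt [e, f] :=
  ⟨by simp, List.IsChain.cons_cons hs.symm (.singleton _), fun _ => ht, by simp [hs, hloop]⟩

theorem card_le_length_of_toFinset_eq_univ {α : Type*} [Fintype α] [DecidableEq α] {l : List α}
    (h : l.toFinset = Finset.univ) : Fintype.card α ≤ l.length := by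
  simpa [h] using List.toFinset_card_le l

theorem not_forall_sign_sum_eq_hamiltonian_pattern {V E : Type*} [Fintype V] [DecidableEq V]
    {src tgt : E → V} (rev : E → E) (hs : ∀ e, src (rev e) = tgt e)
    (ht : ∀ e, tgt (rev e) = src e) (hcard : 2 < Fintype.card V) {es : List E}
    (hc : IsCycle src tgt es) (hham : (es.map src).toFinset = Finset.univ) (w : E → ℝ) :
    ¬ ∀ cs, IsCycle src tgt cs →
        SignType.sign ((cs.map w).sum) =
          (if (cs.map src).toFinset = Finset.univ then 1 else -1) := by
  intro hw
  have hpos : ∀ cs, IsCycle src tgt cs → (cs.map src).toFinset = Finset.univ →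
      0 < (cs.map w).sum := fun cs hcs hcsham =>
    sign_eq_one_iff.mp (by simpa [hcsham] using hw cs hcs)
  have hneg : ∀ cs, IsCycle src tgt cs → (cs.map src).toFinset ≠ Finset.univ →
      (cs.map w).sum < 0 := fun cs hcs hcsham =>
    sign_eq_neg_one_iff.mp (by simpa [hcsham] using hw cs hcs)
  have hdigon : ∀ e ∈ es, w e + w (rev e) < 0 := by
    intro e he
    have hlen := card_le_length_of_toFinset_eq_univ hham
    rw [List.length_map] at hlen
    have hloop := hc.src_ne_tgt (by omega) he
    have hnotham : ([e, rev e].map src).toFinset ≠ Finset.univ := fun h => by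
      have : Fintype.card V ≤ 2 := card_le_length_of_toFinset_eq_univ h
      omega
    simpa using hneg _ (isCycle_pair (hs e) (ht e) hloop) hnotham
  have hfwd := hpos es hc hham
  have hbwd := hpos _ (hc.reverse_map rev hs ht)
    (by rw [hc.toFinset_map_src_reverse_map rev hs, hham])
  have hsum : (es.map w).sum + ((es.reverse.map rev).map w).sum =
      (es.map fun e => w e + w (rev e)).sum := by
    simp [List.sum_map_add, List.map_reverse, Function.comp_def]
  have hdigons : (es.map fun e => w e + w (rev e)).sum < 0 := by
    obtain ⟨e, he⟩ := List.exists_mem_of_ne_nil es hc.1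
    simpa using List.sum_lt_sum _ (fun _ => 0) (fun f hf => (hdigon f hf).le)
      ⟨e, he, hdigon e he⟩
  linarith

theorem stmt17 {V : Type*} [Fintype V] [DecidableEq V] (Adj : V → V → Prop)
    (hsymm : ∀ u v, Adj u v → Adj v u) (hcard : 2 < Fintype.card V)
    -- the bidirected graph G of U has a Hamiltonian directed cycle
    (hham : ∃ es : List {p : V × V // Adj p.1 p.2},
      IsCycle (fun e => e.val.1) (fun e => e.val.2) es ∧
      (es.map (fun e => e.val.1)).toFinset = Finset.univ) :
    -- the pattern + on Hamiltonian cycles and − on all other cycles is not realizable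
    ¬ ∃ w : {p : V × V // Adj p.1 p.2} → ℝ,
        ∀ es, IsCycle (fun e => e.val.1) (fun e => e.val.2) es →
          SignType.sign ((es.map w).sum) =
            (if (es.map (fun e => e.val.1)).toFinset = Finset.univ then 1 else -1) := by
  rintro ⟨w, hw⟩
  obtain ⟨es, hc, hes⟩ := hham
  exact not_forall_sign_sum_eq_hamiltonian_pattern
    (fun e => ⟨(e.val.2, e.val.1), hsymm _ _ e.prop⟩) (fun _ => rfl) (fun _ => rfl)
    hcard hc hes w hw
end
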